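/- arXiv:1706.07936 — 5 statements merged into one kernel-verified Lean document; each statement's English description precedes it below -/
import Mathlib

section
/- Let I be a relational instance over a signature S, and for each element a of the domain of I introduce countably many fresh copies a_j (j ∈ ℕ, with a_0 = a). Define Blowup(I) as the instance with facts {R(a^1_{i_1}, ..., a^n_{i_n}) : R(a^1, ..., a^n) ∈ I, (i_1,...,i_n) ∈ ℕ^n}. Then I and Blowup(I) satisfy exactly the same equality-free first-order sentences over S. -/
/-- A relational signature: a type of relation symbols with arities. -/
structure RelSig where
  Rel : Type
  ar : Rel → ℕ

/-- A fact over signature `S` with domain `D`. -/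
abbrev DBFact (S : RelSig) (D : Type) := Σ R : S.Rel, Fin (S.ar R) → D

/-- An instance: a set of facts. -/
abbrev DBInst (S : RelSig) (D : Type) := Set (DBFact S D)

/-- The active domain of an instance. -/
def adom {S : RelSig} {D : Type} (I : DBInst S D) : Set D :=
  {d | ∃ f ∈ I, ∃ i, f.2 i = d}

/-- Equality-free first-order formulas over signature `S`, de Bruijn style:
`EFForm S n` has at most `n` free variables.  (¬, ∧, ∃ are a complete set
of connectives.)  Note there is no equality atom. -/
inductive EFForm (S : RelSig) : ℕ → Type
  | atom {n : ℕ} (R : S.Rel) (args : Fin (S.ar R) → Fin n) : EFForm S n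
  | not {n : ℕ} : EFForm S n → EFForm S n
  | and {n : ℕ} : EFForm S n → EFForm S n → EFForm S n
  | ex {n : ℕ} : EFForm S (n + 1) → EFForm S n

/-- Active-domain semantics of equality-free first-order logic. -/
def EFSat {S : RelSig} {D : Type} (I : DBInst S D) :
    {n : ℕ} → (Fin n → D) → EFForm S n → Prop
  | _, ν, .atom R args => (⟨R, fun i => ν (args i)⟩ : DBFact S D) ∈ I
  | _, ν, .not φ => ¬ EFSat I ν φ
  | _, ν, .and φ ψ => EFSat I ν φ ∧ EFSat I ν ψ
  | _, ν, .ex φ => ∃ d ∈ adom I, EFSat I (Fin.cons d ν) φ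

/-- The blowup of an instance: each element `a` is replaced by the countably
many copies `(a, j)`, `j ∈ ℕ` (the copy `(a, 0)` playing the role of `a`
itself), and each fact `R(a¹,…,aⁿ)` by all the facts
`R((a¹,i₁),…,(aⁿ,iₙ))`. -/
def Blowup {S : RelSig} {D : Type} (I : DBInst S D) : DBInst S (D × ℕ) :=
  { f | ∃ (a : Fin (S.ar f.1) → D) (k : Fin (S.ar f.1) → ℕ),
      (⟨f.1, a⟩ : DBFact S D) ∈ I ∧ f.2 = fun i => (a i, k i) }

/-! Blowup I is the pullback of I along the surjection Prod.fst : D × ℕ → D. Equality-free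
formulas cannot separate points with the same image under a surjection f: by induction on the
formula, the pullback satisfies φ at ν exactly when I satisfies φ at f ∘ ν. Surjectivity is what
makes the active domain of the pullback the full preimage of the active domain of I, so that the
quantifier cases match up (the Duplicator strategy of the Ehrenfeucht–Fraïssé game). -/

def DBInst.comap {S : RelSig} {D E : Type} (f : E → D) (I : DBInst S D) : DBInst S E :=
  {g | ⟨g.1, f ∘ g.2⟩ ∈ I}

section Comap

variable {S : RelSig} {D E : Type} {f : E → D} {I : DBInst S D}

theorem adom_comap (hf : Function.Surjective f) : adom (I.comap f) = f ⁻¹' adom I := by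
  ext e
  constructor
  · rintro ⟨g, hg, i, rfl⟩
    exact ⟨_, hg, i, rfl⟩
  · classical
    rintro ⟨⟨R, a⟩, ha, i, hai⟩
    refine ⟨⟨R, Function.update (Function.surjInv hf ∘ a) i e⟩, ?_, i, Function.update_self ..⟩
    have hlift : f ∘ Function.update (Function.surjInv hf ∘ a) i e = a := by
      rw [Function.comp_update, ← Function.comp_assoc, Function.comp_surjInv, Function.id_comp,
        ← hai, Function.update_eq_self]
    show ⟨R, f ∘ _⟩ ∈ I
    rwa [hlift]

theorem efSat_comap (hf : Function.Surjective f) {n : ℕ} (φ : EFForm S n) (ν : Fin n → E) :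
    EFSat (I.comap f) ν φ ↔ EFSat I (f ∘ ν) φ := by
  induction φ with
  | atom R args => rfl
  | not φ ih => exact not_congr (ih ν)
  | and φ ψ ihφ ihψ => exact and_congr (ihφ ν) (ihψ ν)
  | ex φ ih =>
    simp only [EFSat, adom_comap hf, Set.mem_preimage, ih, Fin.comp_cons]
    exact (hf.exists (p := fun d => d ∈ adom I ∧ EFSat I (Fin.cons d (f ∘ ν)) φ)).symm

end Comap

theorem blowup_eq_comap_fst {S : RelSig} {D : Type} (I : DBInst S D) :
    Blowup I = I.comap Prod.fst := by
  ext ⟨R, b⟩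
  constructor
  · rintro ⟨a, k, ha, hb⟩
    have hfst : Prod.fst ∘ b = a := by
      funext i
      exact congrArg Prod.fst (congrFun hb i)
    show ⟨R, Prod.fst ∘ b⟩ ∈ I
    rwa [hfst]
  · intro hb
    exact ⟨Prod.fst ∘ b, Prod.snd ∘ b, hb, rfl⟩

/-- `I` and `Blowup I` satisfy the same equality-free
first-order sentences. -/
theorem stmt1 (S : RelSig) (D : Type) (I : DBInst S D) (φ : EFForm S 0) :
    EFSat I Fin.elim0 φ ↔ EFSat (Blowup I) Fin.elim0 φ := by
  rw [blowup_eq_comap_fst, efSat_comap Prod.fst_surjective, Subsingleton.elim (Prod.fst ∘ _) Fin.elim0]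
end

section
/- For any instance I satisfying a set Σ_FO of equality-free first-order constraints, the instance Blowup(I) also satisfies Σ_FO; moreover if a Boolean CQ Q holds in I then Q holds in Blowup(I), and if Q fails in I then Q fails in Blowup(I). -/
/-- A Boolean conjunctive query over `S`: finitely many atoms over
variables `Fin nv` (all existentially quantified). -/
structure CQ (S : RelSig) where
  nv : ℕ
  atoms : Finset ((R : S.Rel) × (Fin (S.ar R) → Fin nv))

/-- A Boolean CQ holds in an instance iff there is a homomorphism from its
canonical database into the instance. -/
def CQ.holds {S : RelSig} {D : Type} (Q : CQ S) (I : DBInst S D) : Prop :=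
  ∃ h : Fin Q.nv → D, ∀ a ∈ Q.atoms, (⟨a.1, fun i => h (a.2 i)⟩ : DBFact S D) ∈ I

/-- `h` is a homomorphism from `J` to `I`. -/
def IsHom {S : RelSig} {D E : Type} (h : D → E) (J : DBInst S D) (I : DBInst S E) : Prop :=
  ∀ f ∈ J, (⟨f.1, fun i => h (f.2 i)⟩ : DBFact S E) ∈ I

/-! The first projection `D × ℕ → D` is a surjective strong homomorphism from `Blowup I` onto `I`:
a tuple is a fact of `Blowup I` exactly when its projection is a fact of `I`. Without equality, a
formula cannot tell an element from its copies, so truth of equality-free formulas is invariant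
along such maps (surjectivity takes care of the active-domain quantifiers). Boolean CQs are
preserved by homomorphisms, and there are homomorphisms both ways: the projection, and the
embedding `d ↦ (d, 0)`. -/

section Homomorphisms

variable {S : RelSig} {D E : Type}

def IsStrongHom (h : E → D) (J : DBInst S E) (I : DBInst S D) : Prop :=
  ∀ (R : S.Rel) (v : Fin (S.ar R) → E),
    (⟨R, v⟩ : DBFact S E) ∈ J ↔ (⟨R, fun i => h (v i)⟩ : DBFact S D) ∈ I

theorem IsStrongHom.isHom {h : E → D} {J : DBInst S E} {I : DBInst S D}
    (hh : IsStrongHom h J I) : IsHom h J I :=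
  fun f hf => (hh f.1 f.2).mp hf

theorem IsStrongHom.image_adom {h : E → D} {J : DBInst S E} {I : DBInst S D}
    (hh : IsStrongHom h J I) (hsurj : Function.Surjective h) : h '' adom J = adom I := by
  apply Set.Subset.antisymm
  · rintro _ ⟨e, ⟨f, hf, i, rfl⟩, rfl⟩
    exact ⟨_, hh.isHom f hf, i, rfl⟩
  · rintro _ ⟨⟨R, v⟩, hf, i, rfl⟩
    choose g hg using hsurj
    have hlift : (⟨R, fun j => g (v j)⟩ : DBFact S E) ∈ J := by
      rw [hh]
      simpa only [hg] using hf
    exact ⟨g (v i), ⟨_, hlift, i, rfl⟩, hg _⟩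

theorem IsStrongHom.efSat_iff {h : E → D} {J : DBInst S E} {I : DBInst S D}
    (hh : IsStrongHom h J I) (hsurj : Function.Surjective h) {n : ℕ} (φ : EFForm S n)
    (ν : Fin n → E) : EFSat J ν φ ↔ EFSat I (h ∘ ν) φ := by
  induction φ with
  | atom R args => exact hh R _
  | not φ ih => exact not_congr (ih ν)
  | and φ ψ ihφ ihψ => exact and_congr (ihφ ν) (ihψ ν)
  | ex φ ih =>
    simp only [EFSat, ih, Fin.comp_cons, ← hh.image_adom hsurj, Set.exists_mem_image]

theorem CQ.holds_of_isHom {h : E → D} {J : DBInst S E} {I : DBInst S D} (hh : IsHom h J I)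
    {Q : CQ S} (hQ : Q.holds J) : Q.holds I :=
  let ⟨g, hg⟩ := hQ
  ⟨h ∘ g, fun a ha => hh _ (hg a ha)⟩

end Homomorphisms

section Blowup

variable {S : RelSig} {D : Type}

theorem isStrongHom_fst_blowup (I : DBInst S D) : IsStrongHom Prod.fst (Blowup I) I := by
  intro R v
  constructor
  · rintro ⟨a, k, ha, hv⟩
    have hfst : (fun i => (v i).1) = a := funext fun i => congrArg Prod.fst (congrFun hv i)
    rwa [hfst]
  · intro hv
    exact ⟨fun i => (v i).1, fun i => (v i).2, hv, rfl⟩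

theorem isHom_blowup_embedding (I : DBInst S D) : IsHom (fun d => (d, 0)) I (Blowup I) :=
  fun f hf => (isStrongHom_fst_blowup I f.1 _).mpr hf

end Blowup

/-- For any instance `I` satisfying a set `Sfo` of
equality-free first-order constraints, `Blowup I` also satisfies `Sfo`;
moreover, if a Boolean CQ `Q` holds in `I` then it holds in `Blowup I`, and
if `Q` fails in `I` then it fails in `Blowup I`. -/
theorem stmt3 (S : RelSig) (D : Type) (I : DBInst S D)
    (Sfo : Set (EFForm S 0)) (Q : CQ S)
    (hI : ∀ φ ∈ Sfo, EFSat I Fin.elim0 φ) :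
    (∀ φ ∈ Sfo, EFSat (Blowup I) Fin.elim0 φ) ∧
      (Q.holds I → Q.holds (Blowup I)) ∧
      (¬ Q.holds I → ¬ Q.holds (Blowup I)) := by
  have hfst := isStrongHom_fst_blowup I
  refine ⟨fun φ hφ => ?_, CQ.holds_of_isHom (isHom_blowup_embedding I),
    fun hQ hQB => hQ (CQ.holds_of_isHom hfst.isHom hQB)⟩
  rw [hfst.efSat_iff Prod.fst_surjective, Subsingleton.elim (Prod.fst ∘ Fin.elim0) Fin.elim0]
  exact hI φ hφ
end

section
/- Let O be the set computed by the truncated accessibility axiom saturation algorithm from a set Σ of inclusion dependencies of width w and a set Δ of truncated accessibility axioms, using breadth bound w. Then every triple (R, p⃗, j) added to O represents a truncated accessibility axiom entailed by Σ ∪ Δ, and conversely every truncated accessibility axiom of breadth at most w entailed by Σ ∪ Δ has its triple in O. -/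
/-! Statement 7: soundness and completeness of the truncated accessibility
axiom saturation algorithm.  Every triple `(R, p⃗, j)` added to the set `O`
represents a truncated accessibility axiom entailed by the inclusion
dependencies `Σ` together with the original truncated accessibility axioms
`Δ` (one per access method), and conversely every entailed truncated
accessibility axiom of breadth at most `w` has its triple in `O`. -/

/-- Facts are pairs of a relation name and a tuple of values. -/
abbrev LFact (D : Type) := ℕ × List D

/-- The active domain of a (list-based) instance. -/
def adomL {D : Type} (I : Set (LFact D)) : Set D := {d | ∃ f ∈ I, d ∈ f.2}

/-- Well-formedness: tuples have the right length. -/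
def WFInst (ar : ℕ → ℕ) {D : Type} (I : Set (LFact D)) : Prop :=
  ∀ f ∈ I, f.2.length = ar f.1

/-- An inclusion dependency (single body atom and single head atom, no
repeated variables) exporting `width` many variables from the body
positions `bpos` to the head positions `hpos`. -/
structure IDl where
  B : ℕ
  H : ℕ
  width : ℕ
  bpos : Fin width → ℕ
  hpos : Fin width → ℕ

/-- Satisfaction of an inclusion dependency. -/
def SatIDl (ar : ℕ → ℕ) (δ : IDl) {D : Type} (I : Set (LFact D)) : Prop :=
  ∀ l : List D, (δ.B, l) ∈ I →
    ∃ l' : List D, (δ.H, l') ∈ I ∧ l'.length = ar δ.H ∧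
      ∀ t, l'[δ.hpos t]? = l[δ.bpos t]?

/-- An access method: a relation and its (finite) set of input positions. -/
structure Methl where
  rel : ℕ
  input : Finset ℕ

/-- Satisfaction of the truncated accessibility axiom
`(⋀_{i ∈ p} accessible(x_i)) ∧ R(x⃗) → accessible(x_j)` in an instance `I`
with accessibility set `A`. -/
def AxSat (ar : ℕ → ℕ) (R : ℕ) (p : Finset ℕ) (j : ℕ) {D : Type}
    (I : Set (LFact D)) (A : Set D) : Prop :=
  ∀ l : List D, (R, l) ∈ I → l.length = ar R →
    (∀ i ∈ p, ∀ d, l[i]? = some d → d ∈ A) →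
    ∀ d, l[j]? = some d → d ∈ A

/-- Entailment of the truncated accessibility axiom `(R, p, j)` by the
inclusion dependencies `Sid` together with the original truncated
accessibility axioms of the methods in `Ms` (axiom `(mt.rel, mt.input, j')`
for every method `mt` and position `j'`). -/
def EntailedAx (ar : ℕ → ℕ) (Sid : Set IDl) (Ms : Set Methl)
    (R : ℕ) (p : Finset ℕ) (j : ℕ) : Prop :=
  ∀ (D : Type) (I : Set (LFact D)) (A : Set D), WFInst ar I →
    (∀ δ ∈ Sid, SatIDl ar δ I) →
    (∀ mt ∈ Ms, ∀ j' < ar mt.rel, AxSat ar mt.rel mt.input j' I A) →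
    AxSat ar R p j I A

/-- The set `O` of triples computed by the truncated accessibility axiom
saturation algorithm with breadth bound `w`: initialization with the
trivial axioms, the backwards-rewriting rule (ID), the rule (Transitivity)
and the rule (Access). -/
inductive InO (ar : ℕ → ℕ) (Sid : Set IDl) (Ms : Set Methl) (w : ℕ) :
    ℕ → Finset ℕ → ℕ → Prop
  | triv {R : ℕ} {p : Finset ℕ} {j : ℕ} (hj : j ∈ p) (hp : p.card ≤ w) :
      InO ar Sid Ms w R p j
  | id {δ : IDl} (hδ : δ ∈ Sid) (T : Finset (Fin δ.width)) (t : Fin δ.width)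
      (h : InO ar Sid Ms w δ.H (T.image δ.hpos) (δ.hpos t)) :
      InO ar Sid Ms w δ.B (T.image δ.bpos) (δ.bpos t)
  | trans {R : ℕ} {p r ts : Finset ℕ} {t' : ℕ}
      (hts : ts.card ≤ w) (hp : p.card ≤ w)
      (h1 : ∀ t ∈ ts, InO ar Sid Ms w R p t)
      (h2 : InO ar Sid Ms w R r t') (hsub : r ⊆ p ∪ ts) :
      InO ar Sid Ms w R p t'
  | access {mt : Methl} (hmt : mt ∈ Ms) {p : Finset ℕ} (hp : p.card ≤ w)
      (hin : ∀ i ∈ mt.input, InO ar Sid Ms w mt.rel p i)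
      {j : ℕ} (hj : j < ar mt.rel) :
      InO ar Sid Ms w mt.rel p j

/-! Soundness is an induction on the derivation of a triple, each rule of the algorithm being
valid in every model of `Σ ∪ Δ`. For completeness, take a value to be accessible iff it is
`true` and let the canonical instance contain every Boolean tuple whose set of `true` positions
is closed under the triples of `O` of breadth at most `w` and under the access methods. It
satisfies `Δ` by construction, and it satisfies `Σ` because rule (ID) transports the closure of
the `≤ w` exported `true` positions from the head back to the body. The tuple marking exactly the
positions `j` with `(R, p⃗, j) ∈ O` lies in this instance, so an entailed axiom `(R, p⃗, j)` forces
`(R, p⃗, j) ∈ O`. -/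

section Soundness

variable {ar : ℕ → ℕ} {Sid : Set IDl} {Ms : Set Methl} {w : ℕ}

theorem InO.axSat {D : Type} {I : Set (LFact D)} {A : Set D}
    (hID : ∀ δ ∈ Sid, SatIDl ar δ I)
    (hM : ∀ mt ∈ Ms, ∀ j' < ar mt.rel, AxSat ar mt.rel mt.input j' I A)
    {R : ℕ} {p : Finset ℕ} {j : ℕ} (h : InO ar Sid Ms w R p j) : AxSat ar R p j I A := by
  induction h with
  | triv hj _ => exact fun l _ _ hacc => hacc _ hj
  | @id δ hδ T t _ ih =>
    intro l hl _ hacc d hd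
    obtain ⟨l', hl', hlen', hagree⟩ := hID δ hδ l hl
    refine ih l' hl' hlen' ?_ d (by rwa [hagree])
    intro i hi d' hd'
    obtain ⟨s, hs, rfl⟩ := Finset.mem_image.mp hi
    exact hacc _ (Finset.mem_image_of_mem _ hs) d' (by rwa [← hagree])
  | trans _ _ _ _ hsub ih₁ ih₂ =>
    intro l hl hlen hacc
    refine ih₂ l hl hlen fun i hi => ?_
    rcases Finset.mem_union.mp (hsub hi) with hip | hit
    · exact hacc i hip
    · exact ih₁ i hit l hl hlen hacc
  | access hmt _ _ hj ih =>
    exact fun l hl hlen hacc => hM _ hmt _ hj l hl hlen fun i hi => ih i hi l hl hlen hacc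

theorem InO.entailedAx {R : ℕ} {p : Finset ℕ} {j : ℕ} (h : InO ar Sid Ms w R p j) :
    EntailedAx ar Sid Ms R p j :=
  fun _ _ _ _ hID hM => h.axSat hID hM

end Soundness

section Completeness

variable {ar : ℕ → ℕ} {Sid : Set IDl} {Ms : Set Methl} {w : ℕ}

def IsSaturated (ar : ℕ → ℕ) (Sid : Set IDl) (Ms : Set Methl) (w : ℕ) (S : ℕ) (X : Set ℕ) :
    Prop :=
  (∀ p : Finset ℕ, ↑p ⊆ X → p.card ≤ w → ∀ q < ar S, InO ar Sid Ms w S p q → q ∈ X) ∧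
  (∀ mt ∈ Ms, mt.rel = S → ↑mt.input ⊆ X → ∀ q < ar S, q ∈ X)

theorem isSaturated_setOf_inO {S : ℕ} {p : Finset ℕ} (hp : p.card ≤ w) :
    IsSaturated ar Sid Ms w S {q | InO ar Sid Ms w S p q} := by
  refine ⟨fun r hr hrw q _ hq => ?_, ?_⟩
  · exact InO.trans hrw hp hr hq Finset.subset_union_right
  · rintro mt hmt rfl hin q hq
    exact InO.access hmt hp hin hq

theorem IsSaturated.inter_lt {S : ℕ} {X : Set ℕ} (hX : IsSaturated ar Sid Ms w S X) :
    IsSaturated ar Sid Ms w S {i | i < ar S ∧ i ∈ X} := by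
  refine ⟨fun p hp hpw q hq hO => ⟨hq, hX.1 p ?_ hpw q hq hO⟩,
    fun mt hmt hrel hin q hq => ⟨hq, hX.2 mt hmt hrel ?_ q hq⟩⟩
  · exact hp.trans fun i hi => hi.2
  · exact hin.trans fun i hi => hi.2

def canonicalInst (ar : ℕ → ℕ) (Sid : Set IDl) (Ms : Set Methl) (w : ℕ) : Set (LFact Bool) :=
  {f | f.2.length = ar f.1 ∧ IsSaturated ar Sid Ms w f.1 {i | f.2[i]? = some true}}

open Classical in
noncomputable def boolTuple (n : ℕ) (X : Set ℕ) : List Bool :=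
  List.ofFn fun q : Fin n => decide (q.1 ∈ X)

@[simp]
theorem length_boolTuple (n : ℕ) (X : Set ℕ) : (boolTuple n X).length = n := by
  simp [boolTuple]

open Classical in
theorem getElem?_boolTuple_of_lt {n i : ℕ} (X : Set ℕ) (hi : i < n) :
    (boolTuple n X)[i]? = some (decide (i ∈ X)) := by
  simp [boolTuple, hi]

theorem getElem?_boolTuple_eq_some_true {n i : ℕ} {X : Set ℕ} :
    (boolTuple n X)[i]? = some true ↔ i < n ∧ i ∈ X := by
  by_cases hi : i < n
  · rw [getElem?_boolTuple_of_lt X hi]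
    simp [hi]
  · simp [boolTuple, hi]

theorem boolTuple_mem_canonicalInst {S : ℕ} {X : Set ℕ} (hX : IsSaturated ar Sid Ms w S X) :
    (S, boolTuple (ar S) X) ∈ canonicalInst ar Sid Ms w := by
  refine ⟨length_boolTuple _ _, ?_⟩
  simpa only [getElem?_boolTuple_eq_some_true] using hX.inter_lt

theorem canonicalInst_wfInst : WFInst ar (canonicalInst ar Sid Ms w) :=
  fun _ hf => hf.1

theorem canonicalInst_satIDl {δ : IDl} (hδ : δ ∈ Sid) (hwidth : δ.width ≤ w)
    (hbpos : ∀ t, δ.bpos t < ar δ.B) (hhpos : ∀ t, δ.hpos t < ar δ.H) :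
    SatIDl ar δ (canonicalInst ar Sid Ms w) := by
  classical
  rintro l ⟨hlen, hsat⟩
  set T := Finset.univ.filter fun s => l[δ.bpos s]? = some true
  have hcard (g : Fin δ.width → ℕ) : (T.image g).card ≤ w :=
    Finset.card_image_le.trans ((T.card_le_univ).trans (by simpa using hwidth))
  have hexport (t : Fin δ.width) :
      InO ar Sid Ms w δ.H (T.image δ.hpos) (δ.hpos t) ↔ l[δ.bpos t]? = some true := by
    refine ⟨fun hO => hsat.1 _ ?_ (hcard _) _ (hbpos t) (InO.id hδ T t hO), fun ht => ?_⟩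
    · intro i hi
      obtain ⟨s, hs, rfl⟩ := Finset.mem_image.mp hi
      exact (Finset.mem_filter.mp hs).2
    · exact InO.triv (Finset.mem_image_of_mem _ (by simpa [T] using ht)) (hcard _)
  refine ⟨_, boolTuple_mem_canonicalInst (isSaturated_setOf_inO (hcard δ.hpos)),
    length_boolTuple _ _, fun t => ?_⟩
  have hb : δ.bpos t < l.length := hlen ▸ hbpos t
  rw [getElem?_boolTuple_of_lt _ (hhpos t), List.getElem?_eq_getElem hb, Option.some_inj,
    Bool.eq_iff_iff, decide_eq_true_iff, Set.mem_ofPred_eq, hexport, List.getElem?_eq_getElem hb,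
    Option.some_inj]

theorem canonicalInst_axSat {mt : Methl} (hmt : mt ∈ Ms) (hin : ∀ i ∈ mt.input, i < ar mt.rel)
    (j : ℕ) : AxSat ar mt.rel mt.input j (canonicalInst ar Sid Ms w) {true} := by
  rintro l ⟨_, hsat⟩ hlen hacc d hd
  have hinput : (mt.input : Set ℕ) ⊆ {i | l[i]? = some true} := by
    intro i hi
    have hi' : i < l.length := hlen ▸ hin i hi
    have hacc_i : l[i] ∈ ({true} : Set Bool) := hacc i hi _ (List.getElem?_eq_getElem hi')
    rw [Set.mem_ofPred_eq, List.getElem?_eq_getElem hi', Set.mem_singleton_iff.mp hacc_i]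
  have hj : j < ar mt.rel := hlen ▸ (List.getElem?_eq_some_iff.mp hd).1
  have htrue : l[j]? = some true := hsat.2 mt hmt rfl hinput j hj
  exact Option.some_inj.mp (hd.symm.trans htrue)

theorem InO.of_entailedAx (hwidth : ∀ δ ∈ Sid, δ.width ≤ w)
    (hwf : ∀ δ ∈ Sid, (∀ t, δ.bpos t < ar δ.B) ∧ (∀ t, δ.hpos t < ar δ.H))
    (hwfM : ∀ mt ∈ Ms, ∀ i ∈ mt.input, i < ar mt.rel)
    {R : ℕ} {p : Finset ℕ} {j : ℕ} (hp : p.card ≤ w) (hj : j < ar R)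
    (hE : EntailedAx ar Sid Ms R p j) : InO ar Sid Ms w R p j := by
  have hsat : AxSat ar R p j (canonicalInst ar Sid Ms w) {true} :=
    hE Bool _ _ canonicalInst_wfInst
      (fun δ hδ => canonicalInst_satIDl hδ (hwidth δ hδ) (hwf δ hδ).1 (hwf δ hδ).2)
      (fun mt hmt j' _ => canonicalInst_axSat hmt (hwfM mt hmt) j')
  have hfires := hsat _ (boolTuple_mem_canonicalInst (isSaturated_setOf_inO hp))
    (length_boolTuple _ _) ?_ _ (getElem?_boolTuple_of_lt _ hj)
  · simpa using hfires
  · intro i hi d hd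
    have hd' : (boolTuple (ar R) {q | InO ar Sid Ms w R p q})[i]? = some true :=
      getElem?_boolTuple_eq_some_true.mpr
        ⟨length_boolTuple (ar R) _ ▸ (List.getElem?_eq_some_iff.mp hd).1, InO.triv hi hp⟩
    exact Option.some_inj.mp (hd.symm.trans hd')

end Completeness

/-- Given inclusion dependencies of width at most `w` and
the truncated accessibility axioms of the access methods, the saturation
algorithm is sound (every triple in `O` is an entailed truncated
accessibility axiom) and complete for breadth at most `w` (every entailed
truncated accessibility axiom of breadth at most `w` has its triple in
`O`). -/
theorem stmt7 (ar : ℕ → ℕ) (Sid : Set IDl) (Ms : Set Methl) (w : ℕ)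
    (hwidth : ∀ δ ∈ Sid, δ.width ≤ w)
    (hwf : ∀ δ ∈ Sid, (∀ t, δ.bpos t < ar δ.B) ∧ (∀ t, δ.hpos t < ar δ.H))
    (hwfM : ∀ mt ∈ Ms, ∀ i ∈ mt.input, i < ar mt.rel) :
    (∀ (R : ℕ) (p : Finset ℕ) (j : ℕ),
        InO ar Sid Ms w R p j → EntailedAx ar Sid Ms R p j) ∧
    (∀ (R : ℕ) (p : Finset ℕ) (j : ℕ), p.card ≤ w →
        (∀ i ∈ p, i < ar R) → j < ar R →
        EntailedAx ar Sid Ms R p j → InO ar Sid Ms w R p j) :=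
  ⟨fun _ _ _ h => h.entailedAx,
    fun _ _ _ hp _ hj hE => InO.of_entailedAx hwidth hwf hwfM hp hj hE⟩
end

section
/- Let Sch be a schema with access methods and result bounds, and let ElimUB(Sch) be the schema obtained by replacing every result bound k by a result lower bound k (removing the upper-bound requirement). Then a common subinstance I_acc of instances I1 and I2 is access-valid in I1 for Sch if and only if it is access-valid in I1 for ElimUB(Sch). Consequently a CQ is monotone answerable in Sch iff it is monotone answerable in ElimUB(Sch). -/
/-- An access method on a relation of `S`: a set of input positions and an
optional result bound. -/
structure Method (S : RelSig) where
  rel : S.Rel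
  input : Set (Fin (S.ar rel))
  bound : Option ℕ

/-- `X` contains at least `j` elements. -/
def AtLeast {α : Type _} (X : Set α) (j : ℕ) : Prop :=
  ∃ T : Finset α, ↑T ⊆ X ∧ T.card = j

/-- The matching tuples of the access `(mt, b)` on instance `I`: the
`mt.rel`-tuples of `I` agreeing with the binding `b` on the input
positions. -/
def matchTuples {S : RelSig} {D : Type} (mt : Method S) (b : Fin (S.ar mt.rel) → D)
    (I : DBInst S D) : Set (Fin (S.ar mt.rel) → D) :=
  {args | (⟨mt.rel, args⟩ : DBFact S D) ∈ I ∧ ∀ i ∈ mt.input, args i = b i}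

/-- `J` is a valid output for an access whose matching tuples are `M`.
If the method has no bound, the unique valid output is `M` itself.
If it has a (lower) bound `k`: for every `j ≤ k`, if there are at least `j`
matching tuples then at least `j` must be output; when `useUB = true` the
bound is moreover an upper bound (at most `k` tuples are output).  Thus
`useUB = true` corresponds to result bounds and `useUB = false` to the
schema `ElimUB(Sch)` with result lower bounds only. -/
def ValidOutput {S : RelSig} {D : Type} (useUB : Bool) (mt : Method S)
    (M J : Set (Fin (S.ar mt.rel) → D)) : Prop :=
  J ⊆ M ∧
    match mt.bound with
    | none => J = M
    | some k => (∀ j ≤ k, AtLeast M j → AtLeast J j) ∧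
        (useUB = true → ¬ AtLeast J (k + 1))

/-- `Iacc` is access-valid in `I1`: every access with a method of the schema
and a binding with values in `Iacc` admits a valid output (in `I1`) all of
whose tuples lie within `Iacc`. -/
def AccessValid {S : RelSig} {D : Type} (useUB : Bool) (Ms : Set (Method S))
    (Iacc I1 : DBInst S D) : Prop :=
  ∀ mt ∈ Ms, ∀ b : Fin (S.ar mt.rel) → D, (∀ i ∈ mt.input, b i ∈ adom Iacc) →
    ∃ J, ValidOutput useUB mt (matchTuples mt b I1) J ∧
      ∀ args ∈ J, (⟨mt.rel, args⟩ : DBFact S D) ∈ Iacc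

/-- Access monotonic-determinacy (`AMonDet`) of `Q`, which characterizes
monotone answerability: for all instances `I1, I2` satisfying the
constraints `C`, if they have a common subinstance that is access-valid in
`I1`, then `Q(I1) ⊆ Q(I2)`. -/
def AMonDet {S : RelSig} (useUB : Bool) (Ms : Set (Method S))
    (C : ∀ D : Type, DBInst S D → Prop) (Q : CQ S) : Prop :=
  ∀ (D : Type) (I1 I2 : DBInst S D), C D I1 → C D I2 →
    (∃ Iacc, Iacc ⊆ I1 ∧ Iacc ⊆ I2 ∧ AccessValid useUB Ms Iacc I1) →
    Q.holds I1 → Q.holds I2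

theorem atLeast_coe_finset_iff {α : Type _} {T : Finset α} {j : ℕ} :
    AtLeast (T : Set α) j ↔ j ≤ T.card := by
  constructor
  · rintro ⟨T', hT'T, rfl⟩
    exact Finset.card_le_card (Finset.coe_subset.mp hT'T)
  · intro hj
    obtain ⟨T', hT'T, hcard⟩ := Finset.exists_subset_card_eq hj
    exact ⟨T', Finset.coe_subset.mpr hT'T, hcard⟩

theorem AtLeast.mono {α : Type _} {X Y : Set α} {j : ℕ} (hXY : X ⊆ Y) (h : AtLeast X j) :
    AtLeast Y j :=
  let ⟨T, hTX, hcard⟩ := h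
  ⟨T, hTX.trans hXY, hcard⟩

theorem AtLeast.of_le {α : Type _} {X : Set α} {i j : ℕ} (h : AtLeast X j) (hij : i ≤ j) :
    AtLeast X i := by
  obtain ⟨T, hTX, rfl⟩ := h
  exact (atLeast_coe_finset_iff.mpr hij).mono hTX

section ValidOutput

variable {S : RelSig} {D : Type} {mt : Method S} {M J : Set (Fin (S.ar mt.rel) → D)}

theorem ValidOutput.elimUB {useUB : Bool} (h : ValidOutput useUB mt M J) :
    ValidOutput false mt M J := by
  obtain ⟨hJM, hbound⟩ := h
  refine ⟨hJM, ?_⟩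
  cases hk : mt.bound with
  | none => simpa only [hk] using hbound
  | some k =>
    rw [hk] at hbound
    exact ⟨hbound.1, nofun⟩

theorem ValidOutput.exists_subset_validOutput_true (h : ValidOutput false mt M J) :
    ∃ J' ⊆ J, ValidOutput true mt M J' := by
  obtain ⟨hJM, hbound⟩ := h
  cases hk : mt.bound with
  | none =>
    refine ⟨J, subset_rfl, hJM, ?_⟩
    simpa only [hk] using hbound
  | some k =>
    rw [hk] at hbound
    by_cases hJk : AtLeast J k
    · obtain ⟨T, hTJ, hcard⟩ := hJk
      refine ⟨T, hTJ, hTJ.trans hJM, ?_⟩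
      rw [hk]
      refine ⟨fun j hj _ => atLeast_coe_finset_iff.mpr (by omega), fun _ hT => ?_⟩
      have := atLeast_coe_finset_iff.mp hT
      omega
    · refine ⟨J, subset_rfl, hJM, ?_⟩
      rw [hk]
      exact ⟨hbound.1, fun _ hJk' => hJk (hJk'.of_le k.le_succ)⟩

end ValidOutput

theorem accessValid_true_iff_false {S : RelSig} {D : Type} {Ms : Set (Method S)}
    {Iacc I1 : DBInst S D} :
    AccessValid true Ms Iacc I1 ↔ AccessValid false Ms Iacc I1 := by
  constructor
  · intro h mt hmt b hb
    obtain ⟨J, hJ, hJacc⟩ := h mt hmt b hb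
    exact ⟨J, hJ.elimUB, hJacc⟩
  · intro h mt hmt b hb
    obtain ⟨J, hJ, hJacc⟩ := h mt hmt b hb
    obtain ⟨J', hJ'J, hJ'⟩ := hJ.exists_subset_validOutput_true
    exact ⟨J', hJ', fun args hargs => hJacc args (hJ'J hargs)⟩

/-- Access-validity with result bounds coincides with
access-validity with the corresponding result lower bounds, and hence
(via the `AMonDet` characterization) monotone answerability in `Sch`
coincides with monotone answerability in `ElimUB(Sch)`. -/
theorem stmt10 (S : RelSig) (Ms : Set (Method S))
    (C : ∀ D : Type, DBInst S D → Prop) (Q : CQ S) :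
    (∀ (D : Type) (I1 I2 Iacc : DBInst S D), Iacc ⊆ I1 → Iacc ⊆ I2 →
        (AccessValid true Ms Iacc I1 ↔ AccessValid false Ms Iacc I1)) ∧
    (AMonDet true Ms C Q ↔ AMonDet false Ms C Q) := by
  refine ⟨fun _ _ _ _ _ _ => accessValid_true_iff_false, ?_⟩
  simp only [AMonDet, accessValid_true_iff_false]
end

section
/- Let Sch be a schema whose constraints Σ consist of inclusion dependencies only (with access methods possibly result-bounded). If a CQ Q is access-determined with respect to Sch, then Q is access monotonically-determined (AMonDet) with respect to Sch. Hence for ID constraints, RA-answerability and monotone answerability coincide. -/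
/-- An inclusion dependency over `S`: body and head each consist of a single
atom with no repeated variables; `width` many variables are exported from
the body positions `bpos` to the head positions `hpos`. -/
structure IncDep (S : RelSig) where
  body : S.Rel
  head : S.Rel
  width : ℕ
  bpos : Fin width → Fin (S.ar body)
  hpos : Fin width → Fin (S.ar head)
  bpos_inj : Function.Injective bpos
  hpos_inj : Function.Injective hpos

/-- Satisfaction of an inclusion dependency. -/
def IncDep.Sat {S : RelSig} {D : Type} (δ : IncDep S) (I : DBInst S D) : Prop :=
  ∀ args : Fin (S.ar δ.body) → D, (⟨δ.body, args⟩ : DBFact S D) ∈ I →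
    ∃ args' : Fin (S.ar δ.head) → D, (⟨δ.head, args'⟩ : DBFact S D) ∈ I ∧
      ∀ t, args' (δ.hpos t) = args (δ.bpos t)

/-- `Iacc` is jointly access-valid in `I1` and `I2`: every access on values
of `Iacc` has an output within `Iacc` that is simultaneously valid in `I1`
and in `I2`. -/
def JointlyAccessValid {S : RelSig} {D : Type} (Ms : Set (Method S))
    (Iacc I1 I2 : DBInst S D) : Prop :=
  ∀ mt ∈ Ms, ∀ b : Fin (S.ar mt.rel) → D, (∀ i ∈ mt.input, b i ∈ adom Iacc) →
    ∃ J, ValidOutput true mt (matchTuples mt b I1) J ∧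
      ValidOutput true mt (matchTuples mt b I2) J ∧
      ∀ args ∈ J, (⟨mt.rel, args⟩ : DBFact S D) ∈ Iacc

/-- `Q` is access-determined (this characterizes RA-answerability): any two
instances satisfying the constraints with a common jointly access-valid
subinstance agree on `Q`. -/
def AccessDetermined {S : RelSig} (Ms : Set (Method S))
    (C : ∀ D : Type, DBInst S D → Prop) (Q : CQ S) : Prop :=
  ∀ (D : Type) (I1 I2 : DBInst S D), C D I1 → C D I2 →
    (∃ Iacc, Iacc ⊆ I1 ∧ Iacc ⊆ I2 ∧ JointlyAccessValid Ms Iacc I1 I2) →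
    (Q.holds I1 ↔ Q.holds I2)

variable {S : RelSig} {D E : Type}

theorem atLeast_iff_le_encard {α : Type _} {X : Set α} {j : ℕ} :
    AtLeast X j ↔ (j : ℕ∞) ≤ X.encard := by
  constructor
  · rintro ⟨T, hTX, rfl⟩
    exact (Set.encard_coe_eq_coe_finsetCard T).symm.trans_le (Set.encard_le_encard hTX)
  · intro hj
    obtain ⟨t, htX, ht⟩ := Set.exists_subset_encard_eq hj
    have hfin := Set.finite_of_encard_eq_coe ht
    refine ⟨hfin.toFinset, by simpa using htX, ?_⟩
    exact_mod_cast hfin.encard_eq_coe_toFinset_card.symm.trans ht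

theorem validOutput_iff_of_bound_none {u : Bool} {mt : Method S} (hb : mt.bound = none)
    {M J : Set (Fin (S.ar mt.rel) → D)} : ValidOutput u mt M J ↔ J = M := by
  simp only [ValidOutput, hb, and_iff_right_iff_imp]
  exact fun h => h.le

theorem validOutput_iff_of_bound_some {mt : Method S} {k : ℕ} (hb : mt.bound = some k)
    {M J : Set (Fin (S.ar mt.rel) → D)} :
    ValidOutput true mt M J ↔ J ⊆ M ∧ J.encard = min (k : ℕ∞) M.encard := by
  simp only [ValidOutput, hb, atLeast_iff_le_encard, forall_const, not_le, Nat.cast_add,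
    Nat.cast_one, ENat.lt_add_one_iff (ENat.natCast_ne_top k)]
  refine and_congr_right fun hJM => ⟨fun ⟨hlow, hup⟩ => ?_, fun h => ⟨?_, h ▸ min_le_left _ _⟩⟩
  · refine le_antisymm (le_min hup (Set.encard_le_encard hJM)) ?_
    rcases le_total (k : ℕ∞) M.encard with hkM | hMk
    · exact (min_le_left _ _).trans (hlow k le_rfl hkM)
    · obtain ⟨m, hm⟩ := ENat.ne_top_iff_exists.mp (ne_top_of_le_ne_top (ENat.natCast_ne_top k) hMk)
      rw [← hm] at hMk ⊢
      exact (min_le_right _ _).trans (hlow m (by exact_mod_cast hMk) hm.le)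
  · exact fun j _ hjM => h ▸ le_min (by exact_mod_cast ‹j ≤ k›) hjM

section ValidOutput

variable {mt : Method S}

theorem validOutput_empty : ValidOutput true mt (∅ : Set (Fin (S.ar mt.rel) → D)) ∅ := by
  rcases hb : mt.bound with _ | k
  · exact (validOutput_iff_of_bound_none hb).mpr rfl
  · exact (validOutput_iff_of_bound_some hb).mpr ⟨subset_rfl, by simp⟩

theorem ValidOutput.image {M J : Set (Fin (S.ar mt.rel) → D)} {g : D → E}
    (hg : Function.Injective g) (h : ValidOutput true mt M J) :
    ValidOutput true mt ((g ∘ ·) '' M) ((g ∘ ·) '' J) := by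
  have hinj : Function.Injective (g ∘ · : (Fin (S.ar mt.rel) → D) → _) := hg.comp_left
  rcases hb : mt.bound with _ | k
  · rw [validOutput_iff_of_bound_none hb] at h ⊢
    rw [h]
  · rw [validOutput_iff_of_bound_some hb] at h ⊢
    exact ⟨Set.image_mono h.1, by rw [hinj.encard_image, hinj.encard_image, h.2]⟩

theorem ValidOutput.exists_union_and_self {M₁ M₂ J₀ : Set (Fin (S.ar mt.rel) → D)}
    (hJ₀ : ValidOutput true mt M₁ J₀) (hJ₀M₂ : J₀ ⊆ M₂) :
    ∃ J, ValidOutput true mt (M₁ ∪ M₂) J ∧ ValidOutput true mt M₂ J := by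
  rcases hb : mt.bound with _ | k
  · rw [validOutput_iff_of_bound_none hb] at hJ₀
    subst hJ₀
    rw [Set.union_eq_right.mpr hJ₀M₂]
    exact ⟨M₂, (validOutput_iff_of_bound_none hb).mpr rfl,
      (validOutput_iff_of_bound_none hb).mpr rfl⟩
  simp only [validOutput_iff_of_bound_some hb] at hJ₀ ⊢
  by_cases hk : (k : ℕ∞) ≤ M₂.encard
  · obtain ⟨J, hJM₂, hJ⟩ := Set.exists_subset_encard_eq hk
    have hkU : (k : ℕ∞) ≤ (M₁ ∪ M₂).encard := hk.trans (Set.encard_le_encard Set.subset_union_right)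
    exact ⟨J, ⟨hJM₂.trans Set.subset_union_right, by rw [hJ, min_eq_left hkU]⟩,
      ⟨hJM₂, by rw [hJ, min_eq_left hk]⟩⟩
  · have hJ₀lt : J₀.encard < k := (Set.encard_le_encard hJ₀M₂).trans_lt (not_le.mp hk)
    have hM₁ : J₀ = M₁ := by
      refine (Set.finite_of_encard_le_coe hJ₀lt.le).eq_of_subset_of_encard_le hJ₀.1 ?_
      have hM₁lt : M₁.encard < k := by simpa [hJ₀.2] using hJ₀lt
      exact (hJ₀.2.trans (min_eq_right hM₁lt.le)).ge
    subst hM₁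
    have hM₂ : M₂ ⊆ M₂ ∧ M₂.encard = min (k : ℕ∞) M₂.encard :=
      ⟨subset_rfl, (min_eq_right (not_le.mp hk).le).symm⟩
    rw [Set.union_eq_right.mpr hJ₀M₂]
    exact ⟨M₂, hM₂, hM₂⟩

end ValidOutput

def DBInst.map (f : D → E) (I : DBInst S D) : DBInst S E :=
  (fun g : DBFact S D => (⟨g.1, fun i => f (g.2 i)⟩ : DBFact S E)) '' I

theorem DBInst.mem_map {f : D → E} {I : DBInst S D} {R : S.Rel} {args : Fin (S.ar R) → E} :
    (⟨R, args⟩ : DBFact S E) ∈ I.map f ↔ ∃ a, (⟨R, a⟩ : DBFact S D) ∈ I ∧ f ∘ a = args := by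
  constructor
  · rintro ⟨⟨R', a⟩, ha, heq⟩
    obtain ⟨rfl, hargs⟩ := Sigma.mk.inj_iff.mp heq
    exact ⟨a, ha, eq_of_heq hargs⟩
  · rintro ⟨a, ha, rfl⟩
    exact ⟨⟨R, a⟩, ha, rfl⟩

theorem mem_adom_map {f : D → E} {I : DBInst S D} {x : E} (hx : x ∈ adom (I.map f)) :
    ∃ d ∈ adom I, f d = x := by
  obtain ⟨_, ⟨g, hg, rfl⟩, i, rfl⟩ := hx
  exact ⟨g.2 i, ⟨g, hg, i, rfl⟩, rfl⟩

theorem isHom_map (f : D → E) (I : DBInst S D) : IsHom f I (I.map f) :=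
  fun g hg => ⟨g, hg, rfl⟩

theorem isHom_map_of_leftInverse {f : D → E} {g : E → D} (hgf : Function.LeftInverse g f)
    (I : DBInst S D) : IsHom g (I.map f) I := by
  rintro _ ⟨⟨R, a⟩, ha, rfl⟩
  simpa only [hgf _] using ha

theorem CQ.holds.of_isHom {Q : CQ S} {J : DBInst S D} {I : DBInst S E} {h : D → E}
    (hQ : Q.holds J) (hh : IsHom h J I) : Q.holds I :=
  let ⟨v, hv⟩ := hQ
  ⟨h ∘ v, fun a ha => hh _ (hv a ha)⟩

theorem IncDep.Sat.map {δ : IncDep S} {I : DBInst S D} (hδ : δ.Sat I) (f : D → E) :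
    δ.Sat (I.map f) := by
  intro args hargs
  obtain ⟨a, ha, rfl⟩ := DBInst.mem_map.mp hargs
  obtain ⟨a', ha', hcoord⟩ := hδ a ha
  exact ⟨f ∘ a', DBInst.mem_map.mpr ⟨a', ha', rfl⟩, fun t => congrArg f (hcoord t)⟩

theorem IncDep.Sat.union {δ : IncDep S} {I I' : DBInst S D} (h : δ.Sat I) (h' : δ.Sat I') :
    δ.Sat (I ∪ I') := by
  rintro args (hargs | hargs)
  · obtain ⟨a', ha', hcoord⟩ := h args hargs
    exact ⟨a', Or.inl ha', hcoord⟩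
  · obtain ⟨a', ha', hcoord⟩ := h' args hargs
    exact ⟨a', Or.inr ha', hcoord⟩

theorem matchTuples_union {mt : Method S} {b : Fin (S.ar mt.rel) → D} {I I' : DBInst S D} :
    matchTuples mt b (I ∪ I') = matchTuples mt b I ∪ matchTuples mt b I' := by
  ext args
  simp only [matchTuples, Set.mem_union, Set.mem_ofPred_eq, or_and_right]

theorem matchTuples_map_of_injective {mt : Method S} {f : D → E} (hf : Function.Injective f)
    {I : DBInst S D} {b : Fin (S.ar mt.rel) → E} {b₀ : Fin (S.ar mt.rel) → D}
    (hb : ∀ i ∈ mt.input, b i = f (b₀ i)) :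
    matchTuples mt b (I.map f) = (f ∘ ·) '' matchTuples mt b₀ I := by
  ext args
  simp only [matchTuples, Set.mem_ofPred_eq, Set.mem_image, DBInst.mem_map]
  constructor
  · rintro ⟨⟨a, ha, rfl⟩, hinput⟩
    exact ⟨a, ⟨ha, fun i hi => hf ((hinput i hi).trans (hb i hi))⟩, rfl⟩
  · rintro ⟨a, ⟨ha, hinput⟩, rfl⟩
    exact ⟨⟨a, ha, rfl⟩, fun i hi => (congrArg f (hinput i hi)).trans (hb i hi).symm⟩

section FreshCopies

def freshOutside (A : Set D) [DecidablePred (· ∈ A)] (d : D) : D ⊕ D :=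
  if d ∈ A then .inl d else .inr d

variable {A : Set D} [DecidablePred (· ∈ A)]

theorem freshOutside_of_mem {d : D} (hd : d ∈ A) : freshOutside A d = .inl d :=
  if_pos hd

theorem freshOutside_eq_inl_iff {d d' : D} : freshOutside A d = .inl d' ↔ d ∈ A ∧ d = d' := by
  unfold freshOutside
  split_ifs with hd <;> simp [hd]

theorem leftInverse_elim_freshOutside : Function.LeftInverse (Sum.elim id id) (freshOutside A) := by
  intro d
  unfold freshOutside
  split_ifs <;> rfl

end FreshCopies

section Transfer

variable {Ms : Set (Method S)} {Iacc I₁ I₂ : DBInst S D} [DecidablePred (· ∈ adom Iacc)]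

theorem exists_validOutput_subset_matchTuples (hI₂ : Iacc ⊆ I₂)
    (hacc : AccessValid true Ms Iacc I₁) {mt : Method S} (hmt : mt ∈ Ms)
    {b : Fin (S.ar mt.rel) → D ⊕ D}
    (hb : ∀ i ∈ mt.input, b i ∈ adom (I₂.map (freshOutside (adom Iacc)))) :
    ∃ J₀, ValidOutput true mt (matchTuples mt b (I₁.map .inl)) J₀ ∧
      J₀ ⊆ matchTuples mt b (I₂.map (freshOutside (adom Iacc))) := by
  by_cases hfresh : ∃ i ∈ mt.input, ∀ d, b i ≠ .inl d
  · obtain ⟨i, hi, hne⟩ := hfresh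
    have hempty : matchTuples mt b (I₁.map .inl) = ∅ := by
      refine Set.eq_empty_of_forall_notMem fun args ⟨hargs, hinput⟩ => ?_
      obtain ⟨a, -, rfl⟩ := DBInst.mem_map.mp hargs
      exact hne (a i) (hinput i hi).symm
    exact ⟨∅, by rw [hempty]; exact validOutput_empty, Set.empty_subset _⟩
  push Not at hfresh
  set b₀ : Fin (S.ar mt.rel) → D := fun i => Sum.elim id id (b i)
  have hb₀ : ∀ i ∈ mt.input, b i = .inl (b₀ i) := fun i hi => by
    obtain ⟨d, hd⟩ := hfresh i hi
    simp [b₀, hd]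
  have hb₀acc : ∀ i ∈ mt.input, b₀ i ∈ adom Iacc := fun i hi => by
    obtain ⟨d, -, hd⟩ := mem_adom_map (hb i hi)
    rw [hb₀ i hi, freshOutside_eq_inl_iff] at hd
    exact hd.2 ▸ hd.1
  obtain ⟨J, hJ, hJacc⟩ := hacc mt hmt b₀ hb₀acc
  refine ⟨(.inl ∘ ·) '' J,
    matchTuples_map_of_injective Sum.inl_injective hb₀ ▸ hJ.image Sum.inl_injective, ?_⟩
  rintro _ ⟨a, ha, rfl⟩
  have hfact := hJacc a ha
  refine ⟨DBInst.mem_map.mpr ⟨a, hI₂ hfact, funext fun i => freshOutside_of_mem ⟨_, hfact, i, rfl⟩⟩,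
    fun i hi => ?_⟩
  rw [hb₀ i hi]
  exact congrArg Sum.inl ((hJ.1 ha).2 i hi)

theorem jointlyAccessValid_map_freshOutside (hI₂ : Iacc ⊆ I₂)
    (hacc : AccessValid true Ms Iacc I₁) :
    JointlyAccessValid Ms (I₂.map (freshOutside (adom Iacc)))
      (I₁.map .inl ∪ I₂.map (freshOutside (adom Iacc))) (I₂.map (freshOutside (adom Iacc))) := by
  intro mt hmt b hb
  obtain ⟨J₀, hJ₀, hJ₀M⟩ := exists_validOutput_subset_matchTuples hI₂ hacc hmt hb
  obtain ⟨J, hJU, hJ⟩ := hJ₀.exists_union_and_self hJ₀M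
  exact ⟨J, matchTuples_union ▸ hJU, hJ, fun args hargs => (hJ.1 hargs).1⟩

end Transfer

theorem AccessDetermined.amonDet {Ms : Set (Method S)} {C : ∀ D : Type, DBInst S D → Prop}
    {Q : CQ S} (hmap : ∀ (D E : Type) (f : D → E) (I : DBInst S D), C D I → C E (I.map f))
    (hunion : ∀ (D : Type) (I I' : DBInst S D), C D I → C D I' → C D (I ∪ I'))
    (hdet : AccessDetermined Ms C Q) : AMonDet true Ms C Q := by
  classical
  rintro D I₁ I₂ hC₁ hC₂ ⟨Iacc, -, hI₂, hacc⟩ hQ₁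
  set ρ := freshOutside (adom Iacc)
  have hQ : Q.holds (I₁.map .inl ∪ I₂.map ρ) :=
    hQ₁.of_isHom fun g hg => Or.inl (isHom_map _ I₁ g hg)
  have hQ₂' : Q.holds (I₂.map ρ) :=
    (hdet _ _ _ (hunion _ _ _ (hmap _ _ _ _ hC₁) (hmap _ _ _ _ hC₂)) (hmap _ _ _ _ hC₂)
      ⟨_, Set.subset_union_right, subset_rfl, jointlyAccessValid_map_freshOutside hI₂ hacc⟩).mp hQ
  exact hQ₂'.of_isHom (isHom_map_of_leftInverse leftInverse_elim_freshOutside I₂)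

/-- If the constraints consist of inclusion dependencies
and `Q` is access-determined, then `Q` is `AMonDet`; hence (for ID
constraints) access-determinacy and access monotonic-determinacy — i.e.
RA-answerability and monotone answerability — coincide. -/
theorem stmt12 (S : RelSig) (Sid : Set (IncDep S)) (Ms : Set (Method S)) (Q : CQ S)
    (h : AccessDetermined Ms (fun _ I => ∀ δ ∈ Sid, δ.Sat I) Q) :
    AMonDet true Ms (fun _ I => ∀ δ ∈ Sid, δ.Sat I) Q ∧
    (AccessDetermined Ms (fun _ I => ∀ δ ∈ Sid, δ.Sat I) Q ↔
      AMonDet true Ms (fun _ I => ∀ δ ∈ Sid, δ.Sat I) Q) := by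
  have hamon : AMonDet true Ms (fun _ I => ∀ δ ∈ Sid, δ.Sat I) Q :=
    h.amonDet (fun _ _ f _ hI δ hδ => (hI δ hδ).map f)
      (fun _ _ _ hI hI' δ hδ => (hI δ hδ).union (hI' δ hδ))
  exact ⟨hamon, fun _ => hamon, fun _ => h⟩
end
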